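/- arXiv:2503.09287 — 7 statements merged into one kernel-verified Lean document; each statement's English description precedes it below -/
import Mathlib

section
/- Let 1 ≤ k ≤ N. Assume σ̄² > 0. Then the population k-average mean squared error satisfies MSE(k) = (σ̄²/k)·(1 + (k−1)·ρ̄). -/
open MeasureTheory Finset

lemma myIntMul {Ω : Type*} [MeasurableSpace Ω] {μ : Measure Ω} {f g : Ω → ℝ}
    (hf : MemLp f 2 μ) (hg : MemLp g 2 μ) :
    Integrable (fun ω => f ω * g ω) μ := by
  refine ((hf.integrable_sq.add hg.integrable_sq).div_const 2).mono'
    (hf.aestronglyMeasurable.mul hg.aestronglyMeasurable) ?_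
  filter_upwards with x
  simp only [Pi.add_apply]
  rw [Real.norm_eq_abs, abs_mul]
  nlinarith [sq_nonneg (|f x| - |g x|), sq_abs (f x), sq_abs (g x)]

lemma myCardA {α : Type*} [DecidableEq α] {s : Finset α} {i : α} (hi : i ∈ s)
    {k : ℕ} (hk : 1 ≤ k) :
    ((s.powersetCard k).filter fun g => i ∈ g).card = (s.card - 1).choose (k - 1) := by
  rw [← Finset.card_erase_of_mem hi, ← Finset.card_powersetCard (k-1) (s.erase i)]
  refine Finset.card_bij' (fun g _ => g.erase i) (fun t _ => insert i t) ?_ ?_ ?_ ?_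
  · intro g hg
    simp only [mem_filter, mem_powersetCard] at hg
    obtain ⟨⟨hsub, hcard⟩, hig⟩ := hg
    rw [mem_powersetCard]
    exact ⟨Finset.erase_subset_erase _ hsub, by rw [Finset.card_erase_of_mem hig, hcard]⟩
  · intro t ht
    rw [mem_powersetCard] at ht
    obtain ⟨hsub, hcard⟩ := ht
    have hit : i ∉ t := fun h => (Finset.mem_erase.1 (hsub h)).1 rfl
    simp only [mem_filter, mem_powersetCard]
    refine ⟨⟨?_, ?_⟩, Finset.mem_insert_self i t⟩
    · exact Finset.insert_subset hi (hsub.trans (Finset.erase_subset _ _))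
    · rw [Finset.card_insert_of_notMem hit, hcard, Nat.sub_add_cancel hk]
  · intro g hg
    simp only [mem_filter] at hg
    exact Finset.insert_erase hg.2
  · intro t ht
    rw [mem_powersetCard] at ht
    have hit : i ∉ t := fun h => (Finset.mem_erase.1 (ht.1 h)).1 rfl
    exact Finset.erase_insert hit

lemma myCardB {α : Type*} [DecidableEq α] {s : Finset α} {i j : α} (hi : i ∈ s) (hj : j ∈ s)
    (hij : i ≠ j) {k : ℕ} (hk : 2 ≤ k) :
    ((s.powersetCard k).filter fun g => i ∈ g ∧ j ∈ g).card = (s.card - 2).choose (k - 2) := by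
  have hji : j ∈ s.erase i := Finset.mem_erase.2 ⟨fun h => hij h.symm, hj⟩
  have h2 : ((s.erase i).card - 1) = s.card - 2 := by
    rw [Finset.card_erase_of_mem hi]; omega
  have h3 : (k - 1) - 1 = k - 2 := by omega
  rw [← h2, ← h3, ← Finset.card_erase_of_mem hji,
    ← Finset.card_powersetCard ((k-1)-1) ((s.erase i).erase j)]
  refine Finset.card_bij' (fun g _ => (g.erase i).erase j) (fun t _ => insert i (insert j t))
    ?_ ?_ ?_ ?_
  · intro g hg
    simp only [mem_filter, mem_powersetCard] at hg
    obtain ⟨⟨hsub, hcard⟩, hig, hjg⟩ := hg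
    rw [mem_powersetCard]
    constructor
    · exact Finset.erase_subset_erase _ (Finset.erase_subset_erase _ hsub)
    · rw [Finset.card_erase_of_mem (Finset.mem_erase.2 ⟨fun h => hij h.symm, hjg⟩),
        Finset.card_erase_of_mem hig, hcard]
  · intro t ht
    rw [mem_powersetCard] at ht
    obtain ⟨hsub, hcard⟩ := ht
    have hjt : j ∉ t := fun h => (Finset.mem_erase.1 (hsub h)).1 rfl
    have hit : i ∉ insert j t := by
      intro h
      rcases Finset.mem_insert.1 h with h | h
      · exact hij h
      · exact (Finset.mem_erase.1 ((Finset.erase_subset _ _) (hsub h))).1 rfl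
    simp only [mem_filter, mem_powersetCard]
    refine ⟨⟨?_, ?_⟩, Finset.mem_insert_self i _, Finset.mem_insert_of_mem (Finset.mem_insert_self j t)⟩
    · refine Finset.insert_subset hi (Finset.insert_subset hj ?_)
      exact hsub.trans ((Finset.erase_subset _ _).trans (Finset.erase_subset _ _))
    · rw [Finset.card_insert_of_notMem hit, Finset.card_insert_of_notMem hjt, hcard]
      omega
  · intro g hg
    simp only [mem_filter] at hg
    obtain ⟨_, hig, hjg⟩ := hg
    show insert i (insert j ((g.erase i).erase j)) = g
    rw [Finset.insert_erase (Finset.mem_erase.2 ⟨fun h => hij h.symm, hjg⟩),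
      Finset.insert_erase hig]
  · intro t ht
    rw [mem_powersetCard] at ht
    have hjt : j ∉ t := fun h => (Finset.mem_erase.1 (ht.1 h)).1 rfl
    have hit : i ∉ insert j t := by
      intro h
      rcases Finset.mem_insert.1 h with h | h
      · exact hij h
      · exact (Finset.mem_erase.1 ((Finset.erase_subset _ _) (ht.1 h))).1 rfl
    show ((insert i (insert j t)).erase i).erase j = t
    rw [Finset.erase_insert hit, Finset.erase_insert hjt]

lemma myCardB1 {α : Type*} [DecidableEq α] {s : Finset α} {i j : α}
    (hij : i ≠ j) :
    ((s.powersetCard 1).filter fun g => i ∈ g ∧ j ∈ g) = ∅ := by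
  rw [Finset.filter_eq_empty_iff]
  intro g hg
  rw [mem_powersetCard] at hg
  rintro ⟨hig, hjg⟩
  have := Finset.one_lt_card.2 ⟨i, hig, j, hjg, hij⟩
  omega

/-- Theorem 1 (paper), statement (mmm): the population k-average MSE equals
`(σ̄²/k)·(1 + (k−1)·ρ̄)`. -/
theorem stmt0
    {Ω : Type*} [MeasurableSpace Ω] (μ : Measure Ω) [IsProbabilityMeasure μ]
    (N : ℕ) (hN : 1 ≤ N) (e : Fin N → Ω → ℝ)
    (hL2 : ∀ i, MemLp (e i) 2 μ)
    (hmean : ∀ i, ∫ ω, e i ω ∂μ = 0)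
    (σ2 : Fin N → ℝ) (hσ2 : ∀ i, σ2 i = ∫ ω, (e i ω) ^ 2 ∂μ)
    (c : Fin N → Fin N → ℝ) (hc : ∀ i j, i ≠ j → c i j = ∫ ω, e i ω * e j ω ∂μ)
    (σbar2 : ℝ) (hσbar2 : σbar2 = (1 / (N : ℝ)) * ∑ i, σ2 i)
    (cbar : ℝ)
    (hcbar : cbar = (1 / (N.choose 2 : ℝ)) * ∑ i, ∑ j, if i < j then c i j else 0)
    (ρbar : ℝ) (hρbar : ρbar = cbar / σbar2)
    (hpos : 0 < σbar2)
    (MSE : ℕ → ℝ)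
    (hMSE : ∀ k, MSE k = (1 / (N.choose k : ℝ)) *
      ∑ g ∈ Finset.powersetCard k (Finset.univ : Finset (Fin N)),
        ∫ ω, ((1 / (k : ℝ)) * ∑ i ∈ g, e i ω) ^ 2 ∂μ)
    (k : ℕ) (hk1 : 1 ≤ k) (hkN : k ≤ N) :
    MSE k = (σbar2 / (k : ℝ)) * (1 + ((k : ℝ) - 1) * ρbar) := by
  classical
  set M : Fin N → Fin N → ℝ := fun i j => ∫ ω, e i ω * e j ω ∂μ with hM
  have hint : ∀ i j : Fin N, Integrable (fun ω => e i ω * e j ω) μ :=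
    fun i j => myIntMul (hL2 i) (hL2 j)
  have hMii : ∀ i, M i i = σ2 i := by
    intro i
    rw [hσ2 i]
    show (∫ ω, e i ω * e i ω ∂μ) = ∫ ω, (e i ω) ^ 2 ∂μ
    rw [show (fun ω => e i ω * e i ω) = fun ω => (e i ω) ^ 2 from funext fun ω => (sq (e i ω)).symm]
  have hMsymm : ∀ i j, M i j = M j i := by
    intro i j
    show (∫ ω, e i ω * e j ω ∂μ) = ∫ ω, e j ω * e i ω ∂μ
    rw [show (fun ω => e i ω * e j ω) = fun ω => e j ω * e i ω from funext fun ω => mul_comm _ _]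
  have hMc : ∀ i j : Fin N, i ≠ j → M i j = c i j := fun i j h => (hc i j h).symm
  -- expand the integral for each subset g
  have hexp : ∀ g : Finset (Fin N),
      (∫ ω, ((1 / (k : ℝ)) * ∑ i ∈ g, e i ω) ^ 2 ∂μ)
        = (1 / (k : ℝ)) ^ 2 * ∑ i ∈ g, ∑ j ∈ g, M i j := by
    intro g
    have h1 : ∀ ω, ((1 / (k : ℝ)) * ∑ i ∈ g, e i ω) ^ 2
        = (1 / (k : ℝ)) ^ 2 * ∑ i ∈ g, ∑ j ∈ g, e i ω * e j ω := by
      intro ω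
      rw [mul_pow, sq (∑ i ∈ g, e i ω), Finset.sum_mul_sum]
    simp_rw [h1]
    rw [integral_const_mul]
    congr 1
    rw [integral_finset_sum g (fun i _ => integrable_finset_sum g fun j _ => hint i j)]
    exact Finset.sum_congr rfl fun i _ => integral_finset_sum g fun j _ => hint i j
  set P := Finset.powersetCard k (Finset.univ : Finset (Fin N)) with hP
  set B : ℕ := if 2 ≤ k then (N - 2).choose (k - 2) else 0 with hB
  have hcardN : (Finset.univ : Finset (Fin N)).card = N := by simp
  have hdiag : ∀ i : Fin N, (P.filter fun g => i ∈ g ∧ i ∈ g).card = (N - 1).choose (k - 1) := by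
    intro i
    have h := myCardA (s := (Finset.univ : Finset (Fin N))) (Finset.mem_univ i) hk1
    rw [hcardN] at h
    rw [← h, hP]
    congr 1
    refine Finset.filter_congr fun g _ => by simp
  have hoff : ∀ i j : Fin N, i ≠ j → (P.filter fun g => i ∈ g ∧ j ∈ g).card = B := by
    intro i j hij
    by_cases h2 : 2 ≤ k
    · have h := myCardB (s := (Finset.univ : Finset (Fin N))) (Finset.mem_univ i)
        (Finset.mem_univ j) hij h2
      rw [hcardN] at h
      rw [hB, if_pos h2, hP, h]
    · have hk : k = 1 := by omega
      rw [hB, if_neg h2, hP, hk, myCardB1 hij, Finset.card_empty]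
  -- the combinatorial identity
  have hswap : ∑ g ∈ P, ∑ i ∈ g, ∑ j ∈ g, M i j
      = ∑ i, ∑ j, ((P.filter fun g => i ∈ g ∧ j ∈ g).card : ℝ) * M i j := by
    have step1 : ∀ g : Finset (Fin N), ∑ i ∈ g, ∑ j ∈ g, M i j
        = ∑ i, ∑ j, if i ∈ g ∧ j ∈ g then M i j else 0 := by
      intro g
      rw [show (∑ i ∈ g, ∑ j ∈ g, M i j)
          = ∑ i, if i ∈ g then (∑ j ∈ g, M i j) else 0 by
        rw [Finset.sum_ite_mem, Finset.univ_inter]]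
      refine Finset.sum_congr rfl fun i _ => ?_
      split_ifs with h
      · rw [show (∑ j ∈ g, M i j) = ∑ j, if j ∈ g then M i j else 0 by
          rw [Finset.sum_ite_mem, Finset.univ_inter]]
        exact Finset.sum_congr rfl fun j _ => by simp [h]
      · symm
        refine Finset.sum_eq_zero fun j _ => ?_
        simp [h]
    calc ∑ g ∈ P, ∑ i ∈ g, ∑ j ∈ g, M i j
        = ∑ g ∈ P, ∑ i, ∑ j, if i ∈ g ∧ j ∈ g then M i j else 0 :=
          Finset.sum_congr rfl fun g _ => step1 g
      _ = ∑ i, ∑ j, ∑ g ∈ P, if i ∈ g ∧ j ∈ g then M i j else 0 := by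
          rw [Finset.sum_comm]
          exact Finset.sum_congr rfl fun i _ => Finset.sum_comm
      _ = ∑ i, ∑ j, ((P.filter fun g => i ∈ g ∧ j ∈ g).card : ℝ) * M i j := by
          refine Finset.sum_congr rfl fun i _ => Finset.sum_congr rfl fun j _ => ?_
          rw [← Finset.sum_filter, Finset.sum_const, nsmul_eq_mul]
  have hT : ∑ g ∈ P, ∑ i ∈ g, ∑ j ∈ g, M i j
      = ((N - 1).choose (k - 1) : ℝ) * (∑ i, σ2 i)
        + (B : ℝ) * (∑ i, ∑ j ∈ Finset.univ.erase i, M i j) := by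
    rw [hswap]
    have hper : ∀ i : Fin N, ∑ j, ((P.filter fun g => i ∈ g ∧ j ∈ g).card : ℝ) * M i j
        = ((N - 1).choose (k - 1) : ℝ) * σ2 i
          + ∑ j ∈ Finset.univ.erase i, (B : ℝ) * M i j := by
      intro i
      rw [← Finset.add_sum_erase Finset.univ _ (Finset.mem_univ i), hdiag i, hMii i]
      congr 1
      refine Finset.sum_congr rfl fun j hj => ?_
      rw [hoff i j fun h => (Finset.mem_erase.1 hj).1 h.symm]
    rw [Finset.sum_congr rfl fun i _ => hper i, Finset.sum_add_distrib, ← Finset.mul_sum]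
    congr 1
    calc ∑ x : Fin N, ∑ j ∈ Finset.univ.erase x, (B : ℝ) * M x j
        = ∑ x : Fin N, (B : ℝ) * ∑ j ∈ Finset.univ.erase x, M x j :=
          Finset.sum_congr rfl fun i _ => (Finset.mul_sum _ _ _).symm
      _ = (B : ℝ) * ∑ x : Fin N, ∑ j ∈ Finset.univ.erase x, M x j := (Finset.mul_sum _ _ _).symm
  -- off-diagonal sum equals twice the strictly-upper-triangular sum
  have hD : ∑ i, ∑ j ∈ Finset.univ.erase i, M i j
      = 2 * ∑ i, ∑ j, if i < j then c i j else 0 := by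
    have step : ∀ i : Fin N, ∑ j ∈ Finset.univ.erase i, M i j
        = (∑ j, if i < j then M i j else 0) + ∑ j, if j < i then M i j else 0 := by
      intro i
      rw [show (∑ j ∈ Finset.univ.erase i, M i j)
          = ∑ j, if j ∈ Finset.univ.erase i then M i j else 0 by
        rw [Finset.sum_ite_mem, Finset.univ_inter]]
      rw [← Finset.sum_add_distrib]
      refine Finset.sum_congr rfl fun j _ => ?_
      rcases lt_trichotomy i j with h | h | h
      · rw [if_pos (Finset.mem_erase.2 ⟨(ne_of_lt h).symm, Finset.mem_univ j⟩),
          if_pos h, if_neg (not_lt_of_gt h), add_zero]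
      · rw [if_neg (by simp [h]), if_neg (by simp [h]), if_neg (by simp [h]), add_zero]
      · rw [if_pos (Finset.mem_erase.2 ⟨ne_of_lt h, Finset.mem_univ j⟩),
          if_neg (not_lt_of_gt h), if_pos h, zero_add]
    rw [Finset.sum_congr rfl fun i _ => step i, Finset.sum_add_distrib]
    have h2 : ∑ i, ∑ j, (if j < i then M i j else 0)
        = ∑ i, ∑ j, if i < j then M i j else 0 := by
      rw [Finset.sum_comm]
      refine Finset.sum_congr rfl fun i _ => Finset.sum_congr rfl fun j _ => ?_
      rcases lt_or_ge i j with h | h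
      · rw [if_pos h, if_pos h, hMsymm]
      · rw [if_neg (not_lt_of_ge h), if_neg (not_lt_of_ge h)]
    have h3 : ∑ i, ∑ j, (if i < j then M i j else 0)
        = ∑ i, ∑ j, if i < j then c i j else 0 := by
      refine Finset.sum_congr rfl fun i _ => Finset.sum_congr rfl fun j _ => ?_
      rcases lt_or_ge i j with h | h
      · rw [if_pos h, if_pos h, hMc i j (ne_of_lt h)]
      · rw [if_neg (not_lt_of_ge h), if_neg (not_lt_of_ge h)]
    rw [h2, h3]
    ring
  -- putting it together
  have hsum2 : ∑ i, σ2 i = (N : ℝ) * σbar2 := by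
    rw [hσbar2]
    have hNne : (N : ℝ) ≠ 0 := Nat.cast_ne_zero.2 (by omega)
    field_simp
  have hMSEk : MSE k = (1 / (N.choose k : ℝ)) * ((1 / (k : ℝ)) ^ 2 *
      (((N - 1).choose (k - 1) : ℝ) * ((N : ℝ) * σbar2)
        + (B : ℝ) * (2 * ∑ i, ∑ j, if i < j then c i j else 0))) := by
    rw [hMSE k, ← hP, Finset.sum_congr rfl fun g _ => hexp g, ← Finset.mul_sum, hT, hD, hsum2]
  have hkne : (k : ℝ) ≠ 0 := Nat.cast_ne_zero.2 (by omega)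
  have hNne : (N : ℝ) ≠ 0 := Nat.cast_ne_zero.2 (by omega)
  have hσne : σbar2 ≠ 0 := ne_of_gt hpos
  have hCne : (N.choose k : ℝ) ≠ 0 := Nat.cast_ne_zero.2 (Nat.choose_pos hkN).ne'
  by_cases h2 : 2 ≤ k
  · -- main case k ≥ 2 (hence N ≥ 2)
    have hN2 : 2 ≤ N := le_trans h2 hkN
    have hN1ne : (N : ℝ) - 1 ≠ 0 := by
      have : (2 : ℝ) ≤ (N : ℝ) := by exact_mod_cast hN2
      linarith
    have hC2ne : (N.choose 2 : ℝ) ≠ 0 := Nat.cast_ne_zero.2 (Nat.choose_pos hN2).ne'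
    have hBval : (B : ℝ) = ((N - 2).choose (k - 2) : ℝ) := by rw [hB, if_pos h2]
    -- choose identities
    have f1 : (N : ℝ) * ((N - 1).choose (k - 1) : ℝ) = (N.choose k : ℝ) * k := by
      have h := Nat.add_one_mul_choose_eq (N - 1) (k - 1)
      rw [Nat.sub_add_cancel hN,
        Nat.sub_add_cancel hk1] at h
      exact_mod_cast h
    have f2 : ((N : ℝ) - 1) * ((N - 2).choose (k - 2) : ℝ)
        = ((N - 1).choose (k - 1) : ℝ) * ((k : ℝ) - 1) := by
      have h := Nat.add_one_mul_choose_eq (N - 2) (k - 2)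
      rw [show N - 2 + 1 = N - 1 by omega, show k - 2 + 1 = k - 1 by omega] at h
      have h' : ((N - 1 : ℕ) : ℝ) * ((N - 2).choose (k - 2) : ℝ)
          = ((N - 1).choose (k - 1) : ℝ) * ((k - 1 : ℕ) : ℝ) := by exact_mod_cast h
      rwa [Nat.cast_sub hN, Nat.cast_sub hk1, Nat.cast_one] at h'
    have f3 : 2 * (N.choose 2 : ℝ) = (N : ℝ) * ((N : ℝ) - 1) := by
      have h := Nat.add_one_mul_choose_eq (N - 1) 1
      rw [Nat.sub_add_cancel hN, Nat.choose_one_right] at h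
      have h' : (N : ℝ) * ((N - 1 : ℕ) : ℝ) = (N.choose 2 : ℝ) * 2 := by exact_mod_cast h
      rw [Nat.cast_sub hN, Nat.cast_one] at h'
      linarith
    have hcsum : (∑ i, ∑ j, if i < j then c i j else 0) = (N.choose 2 : ℝ) * cbar := by
      rw [hcbar]; field_simp
    rw [hMSEk, hBval, hcsum, hρbar]
    have key : (N : ℝ) * (((N : ℝ) - 1) * ((N - 2).choose (k - 2) : ℝ))
        = (N.choose k : ℝ) * (k : ℝ) * ((k : ℝ) - 1) := by
      calc (N : ℝ) * (((N : ℝ) - 1) * ((N - 2).choose (k - 2) : ℝ))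
          = (N : ℝ) * (((N - 1).choose (k - 1) : ℝ) * ((k : ℝ) - 1)) := by rw [f2]
        _ = ((N : ℝ) * ((N - 1).choose (k - 1) : ℝ)) * ((k : ℝ) - 1) := by ring
        _ = (N.choose k : ℝ) * (k : ℝ) * ((k : ℝ) - 1) := by rw [f1]
    rw [show ((N - 1).choose (k - 1) : ℝ) * ((N : ℝ) * σbar2) = (N.choose k : ℝ) * k * σbar2 by
        linear_combination σbar2 * f1,
      show ((N - 2).choose (k - 2) : ℝ) * (2 * ((N.choose 2 : ℝ) * cbar))
        = (N.choose k : ℝ) * k * ((k : ℝ) - 1) * cbar by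
        linear_combination (cbar * ((N - 2).choose (k - 2) : ℝ)) * f3 + cbar * key]
    field_simp
  · -- case k = 1
    have hk : k = 1 := by omega
    subst hk
    have hB0 : (B : ℝ) = 0 := by rw [hB, if_neg h2]; simp
    rw [hMSEk, hB0]
    simp only [Nat.choose_one_right, show (1:ℕ) - 1 = 0 from rfl, Nat.choose_zero_right]
    push_cast
    field_simp
    ring
end

section
/- Let 1 ≤ k ≤ N and assume σ̄² > 0. Then the relative (ratio) k-average mean squared error satisfies MSE(k)/MSE(1) = (1/k)·(1 + (k−1)·ρ̄). -/
open MeasureTheory Finset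

lemma my_int_mul {Ω : Type*} [MeasurableSpace Ω] {μ : Measure Ω} {f g : Ω → ℝ}
    (hf : MemLp f 2 μ) (hg : MemLp g 2 μ) :
    Integrable (fun x => f x * g x) μ := by
  have h1 := hf.integrable_sq
  have h2 := hg.integrable_sq
  refine (h1.add h2).mono' (hf.aestronglyMeasurable.mul hg.aestronglyMeasurable) ?_
  filter_upwards with x
  simp only [Pi.add_apply, Real.norm_eq_abs, abs_mul]
  nlinarith [sq_nonneg (|f x| - |g x|), sq_abs (f x), sq_abs (g x)]

lemma count_superset {α : Type*} [DecidableEq α] (s t : Finset α) (ht : t ⊆ s)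
    (k : ℕ) (htk : t.card ≤ k) :
    ((Finset.powersetCard k s).filter (fun g => t ⊆ g)).card
      = (s.card - t.card).choose (k - t.card) := by
  rw [← Finset.card_sdiff_of_subset ht, ← Finset.card_powersetCard]
  refine Finset.card_bij' (fun g _ => g \ t) (fun h _ => h ∪ t) ?_ ?_ ?_ ?_
  · intro g hg
    simp only [Finset.mem_filter, Finset.mem_powersetCard] at hg
    obtain ⟨⟨hgs, hgc⟩, htg⟩ := hg
    rw [Finset.mem_powersetCard]
    exact ⟨Finset.sdiff_subset_sdiff hgs (le_refl t), by rw [Finset.card_sdiff_of_subset htg, hgc]⟩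
  · intro h hh
    rw [Finset.mem_powersetCard] at hh
    obtain ⟨hhs, hhc⟩ := hh
    have hdisj : Disjoint h t := (Finset.sdiff_disjoint.mono_left hhs)
    simp only [Finset.mem_filter, Finset.mem_powersetCard]
    refine ⟨⟨Finset.union_subset (hhs.trans Finset.sdiff_subset) ht, ?_⟩,
      Finset.subset_union_right⟩
    rw [Finset.card_union_of_disjoint hdisj, hhc, Nat.sub_add_cancel htk]
  · intro g hg
    simp only [Finset.mem_filter] at hg
    exact Finset.sdiff_union_of_subset hg.2
  · intro h hh
    rw [Finset.mem_powersetCard] at hh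
    have hdisj : Disjoint h t := (Finset.sdiff_disjoint.mono_left hh.1)
    exact Finset.union_sdiff_cancel_right hdisj

lemma count_superset_zero {α : Type*} [DecidableEq α] (s t : Finset α)
    (k : ℕ) (htk : k < t.card) :
    ((Finset.powersetCard k s).filter (fun g => t ⊆ g)).card = 0 := by
  rw [Finset.card_eq_zero, Finset.filter_eq_empty_iff]
  intro g hg htg
  rw [Finset.mem_powersetCard] at hg
  exact absurd (Finset.card_le_card htg) (by omega)

lemma sum_powersetCard_swap {α : Type*} [Fintype α] [DecidableEq α] (k : ℕ) (f : α → α → ℝ) :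
    ∑ g ∈ Finset.powersetCard k (Finset.univ : Finset α), ∑ i ∈ g, ∑ j ∈ g, f i j
      = ∑ i : α, ∑ j : α,
          (((Finset.powersetCard k (Finset.univ : Finset α)).filter
              (fun g => ({i, j} : Finset α) ⊆ g)).card : ℝ) * f i j := by
  have h1 : ∀ g : Finset α, (∑ i ∈ g, ∑ j ∈ g, f i j)
      = ∑ i : α, ∑ j : α, if ({i, j} : Finset α) ⊆ g then f i j else 0 := by
    intro g
    have h2 : ∀ i : α, (∑ j ∈ g, f i j) = ∑ j : α, if j ∈ g then f i j else 0 := by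
      intro i; rw [Finset.sum_ite_mem, Finset.univ_inter]
    have h3 : (∑ i ∈ g, ∑ j : α, if j ∈ g then f i j else 0)
        = ∑ i : α, if i ∈ g then (∑ j : α, if j ∈ g then f i j else 0) else 0 := by
      rw [Finset.sum_ite_mem, Finset.univ_inter]
    rw [Finset.sum_congr rfl (fun i _ => h2 i), h3]
    refine Finset.sum_congr rfl fun i _ => ?_
    by_cases hi : i ∈ g
    · simp only [hi, if_true]
      refine Finset.sum_congr rfl fun j _ => ?_
      by_cases hj : j ∈ g <;> simp [hi, hj, Finset.insert_subset_iff]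
    · rw [if_neg hi]
      refine (Finset.sum_eq_zero fun j _ => ?_).symm
      rw [if_neg]
      simp [Finset.insert_subset_iff, hi]
  rw [Finset.sum_congr rfl (fun g _ => h1 g), Finset.sum_comm]
  refine Finset.sum_congr rfl fun i _ => ?_
  rw [Finset.sum_comm]
  refine Finset.sum_congr rfl fun j _ => ?_
  rw [← Finset.sum_filter, Finset.sum_const, nsmul_eq_mul]

/-- Theorem 1 (paper), statement (mmm): the population k-average MSE equals
`(σ̄²/k)·(1 + (k−1)·ρ̄)`. -/
theorem stmt1
    {Ω : Type*} [MeasurableSpace Ω] (μ : Measure Ω) [IsProbabilityMeasure μ]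
    (N : ℕ) (hN : 1 ≤ N) (e : Fin N → Ω → ℝ)
    (hL2 : ∀ i, MemLp (e i) 2 μ)
    (hmean : ∀ i, ∫ ω, e i ω ∂μ = 0)
    (σ2 : Fin N → ℝ) (hσ2 : ∀ i, σ2 i = ∫ ω, (e i ω) ^ 2 ∂μ)
    (c : Fin N → Fin N → ℝ) (hc : ∀ i j, i ≠ j → c i j = ∫ ω, e i ω * e j ω ∂μ)
    (σbar2 : ℝ) (hσbar2 : σbar2 = (1 / (N : ℝ)) * ∑ i, σ2 i)
    (cbar : ℝ)
    (hcbar : cbar = (1 / (N.choose 2 : ℝ)) * ∑ i, ∑ j, if i < j then c i j else 0)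
    (ρbar : ℝ) (hρbar : ρbar = cbar / σbar2)
    (hpos : 0 < σbar2)
    (MSE : ℕ → ℝ)
    (hMSE : ∀ k, MSE k = (1 / (N.choose k : ℝ)) *
      ∑ g ∈ Finset.powersetCard k (Finset.univ : Finset (Fin N)),
        ∫ ω, ((1 / (k : ℝ)) * ∑ i ∈ g, e i ω) ^ 2 ∂μ)
    (k : ℕ) (hk1 : 1 ≤ k) (hkN : k ≤ N) :
    MSE k / MSE 1 = (1 / (k : ℝ)) * (1 + ((k : ℝ) - 1) * ρbar) := by
  set f : Fin N → Fin N → ℝ := fun i j => ∫ ω, e i ω * e j ω ∂μ with hfdef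
  have hint : ∀ (i j : Fin N), Integrable (fun ω => e i ω * e j ω) μ :=
    fun i j => my_int_mul (hL2 i) (hL2 j)
  have key : ∀ g : Finset (Fin N), (∫ ω, (∑ i ∈ g, e i ω) ^ 2 ∂μ)
      = ∑ i ∈ g, ∑ j ∈ g, f i j := by
    intro g
    have h1 : ∀ ω, (∑ i ∈ g, e i ω) ^ 2 = ∑ i ∈ g, ∑ j ∈ g, e i ω * e j ω := by
      intro ω; rw [sq, Finset.sum_mul_sum]
    simp_rw [h1]
    rw [integral_finset_sum _ (fun i _ => integrable_finset_sum _ (fun j _ => hint i j))]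
    exact Finset.sum_congr rfl fun i _ => integral_finset_sum _ (fun j _ => hint i j)
  set T : ℝ := ∑ i, ∑ j ∈ Finset.univ.erase i, c i j with hTdef
  have hcsymm : ∀ i j : Fin N, i ≠ j → c i j = c j i := by
    intro i j h
    rw [hc i j h, hc j i h.symm]
    exact integral_congr_ae (Filter.Eventually.of_forall fun ω => mul_comm _ _)
  have hT2 : T = 2 * ∑ i, ∑ j, (if i < j then c i j else 0) := by
    have h1 : ∀ i : Fin N, (∑ j ∈ Finset.univ.erase i, c i j)
        = (∑ j, if i < j then c i j else 0) + (∑ j, if j < i then c i j else 0) := by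
      intro i
      rw [← Finset.sum_add_distrib, ← Finset.filter_ne', Finset.sum_filter]
      refine Finset.sum_congr rfl fun j _ => ?_
      rcases lt_trichotomy i j with h | h | h
      · simp [h, h.ne, h.ne', asymm h]
      · simp [h]
      · simp [h, h.ne, h.ne', asymm h]
    have h2 : (∑ i : Fin N, ∑ j, if j < i then c i j else 0)
        = ∑ i : Fin N, ∑ j, if i < j then c i j else 0 := by
      rw [Finset.sum_comm]
      refine Finset.sum_congr rfl fun i _ => Finset.sum_congr rfl fun j _ => ?_
      by_cases h : i < j
      · rw [if_pos h, if_pos h, hcsymm j i h.ne']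
      · rw [if_neg h, if_neg h]
    rw [hTdef, Finset.sum_congr rfl fun i _ => h1 i, Finset.sum_add_distrib, h2]
    ring
  -- value of MSE m for 1 ≤ m ≤ N
  have hMval : ∀ m : ℕ, 1 ≤ m → MSE m = (1 / (N.choose m : ℝ)) * ((1 / (m : ℝ)) ^ 2 *
      (((N - 1).choose (m - 1) : ℝ) * (∑ i, σ2 i)
        + (if 2 ≤ m then ((N - 2).choose (m - 2) : ℝ) else 0) * T)) := by
    intro m hm
    rw [hMSE m]
    have hstep : ∀ g : Finset (Fin N),
        (∫ ω, ((1 / (m : ℝ)) * ∑ i ∈ g, e i ω) ^ 2 ∂μ)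
          = (1 / (m : ℝ)) ^ 2 * ∑ i ∈ g, ∑ j ∈ g, f i j := by
      intro g
      have h0 : ∀ ω, ((1 / (m : ℝ)) * ∑ i ∈ g, e i ω) ^ 2
          = (1 / (m : ℝ)) ^ 2 * (∑ i ∈ g, e i ω) ^ 2 := fun ω => by ring
      simp_rw [h0]
      rw [MeasureTheory.integral_const_mul, key g]
    rw [Finset.sum_congr rfl fun g _ => hstep g, ← Finset.mul_sum, sum_powersetCard_swap]
    congr 2
    have hcnt1 : ∀ i : Fin N,
        (((Finset.powersetCard m (Finset.univ : Finset (Fin N))).filter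
            (fun g => ({i, i} : Finset (Fin N)) ⊆ g)).card : ℝ)
          = ((N - 1).choose (m - 1) : ℝ) := by
      intro i
      have hpair : ({i, i} : Finset (Fin N)) = {i} := by simp
      rw [hpair, count_superset _ _ (Finset.subset_univ _) m (by simpa using hm)]
      simp
    have hsplit : ∀ i : Fin N,
        (∑ j, (((Finset.powersetCard m (Finset.univ : Finset (Fin N))).filter
            (fun g => ({i, j} : Finset (Fin N)) ⊆ g)).card : ℝ) * f i j)
          = ((N - 1).choose (m - 1) : ℝ) * σ2 i
            + (if 2 ≤ m then ((N - 2).choose (m - 2) : ℝ) else 0)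
              * ∑ j ∈ Finset.univ.erase i, c i j := by
      intro i
      rw [← Finset.add_sum_erase _ _ (Finset.mem_univ i)]
      congr 1
      · rw [hcnt1 i]
        congr 1
        rw [hσ2 i]
        exact integral_congr_ae (Filter.Eventually.of_forall fun ω => (sq (e i ω)).symm)
      · rw [Finset.mul_sum]
        refine Finset.sum_congr rfl fun j hj => ?_
        have hji : j ≠ i := (Finset.mem_erase.1 hj).1
        have hij : i ≠ j := hji.symm
        have hcard : ({i, j} : Finset (Fin N)).card = 2 := Finset.card_pair hij
        congr 1
        · by_cases h2m : 2 ≤ m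
          · rw [if_pos h2m,
              count_superset _ _ (Finset.subset_univ _) m (by rw [hcard]; exact h2m)]
            simp [hcard]
          · rw [if_neg h2m, count_superset_zero _ _ m (by omega)]
            simp
        · exact (hc i j hij).symm
    rw [Finset.sum_congr rfl fun i _ => hsplit i, Finset.sum_add_distrib,
      ← Finset.mul_sum, ← Finset.mul_sum]
  -- nonvanishing facts
  have hNR : (N : ℝ) ≠ 0 := Nat.cast_ne_zero.2 (by omega)
  have hkR : (k : ℝ) ≠ 0 := Nat.cast_ne_zero.2 (by omega)
  have hSσ : (∑ i, σ2 i) = (N : ℝ) * σbar2 := by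
    rw [hσbar2]; field_simp
  have hM1 : MSE 1 = σbar2 := by
    rw [hMval 1 le_rfl, if_neg (by norm_num), hSσ]
    simp [Nat.choose_one_right]
    field_simp
  by_cases hk2 : 2 ≤ k
  · -- k ≥ 2, hence N ≥ 2
    have hN2 : 2 ≤ N := le_trans hk2 hkN
    have hχ : (N.choose 2 : ℝ) ≠ 0 :=
      Nat.cast_ne_zero.2 (Nat.choose_pos hN2).ne'
    have hP : (∑ i, ∑ j, if i < j then c i j else 0) = (N.choose 2 : ℝ) * cbar := by
      rw [hcbar]; field_simp
    have hA : (N.choose k : ℝ) ≠ 0 := Nat.cast_ne_zero.2 (Nat.choose_pos hkN).ne'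
    -- nat identities
    have e1 : N * (N - 1).choose (k - 1) = N.choose k * k := by
      have h := Nat.add_one_mul_choose_eq (N - 1) (k - 1)
      rwa [Nat.sub_add_cancel hN,
        Nat.sub_add_cancel hk1] at h
    have e2 : (N - 1) * (N - 2).choose (k - 2) = (N - 1).choose (k - 1) * (k - 1) := by
      have h := Nat.add_one_mul_choose_eq (N - 2) (k - 2)
      have hNN : N - 2 + 1 = N - 1 := by omega
      have hkk : k - 2 + 1 = k - 1 := by omega
      rwa [hNN, hkk] at h
    have e3 : N * (N - 1) = N.choose 2 * 2 := by
      have h := Nat.add_one_mul_choose_eq (N - 1) 1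
      rwa [Nat.sub_add_cancel hN, Nat.choose_one_right] at h
    have E1 : (N : ℝ) * ((N - 1).choose (k - 1) : ℝ) = (N.choose k : ℝ) * k := by
      exact_mod_cast congrArg (Nat.cast : ℕ → ℝ) e1
    have E2 : ((N : ℝ) - 1) * ((N - 2).choose (k - 2) : ℝ)
        = ((N - 1).choose (k - 1) : ℝ) * ((k : ℝ) - 1) := by
      have h := congrArg (Nat.cast : ℕ → ℝ) e2
      push_cast [Nat.cast_sub hN, Nat.cast_sub hk1] at h
      linarith
    have E3 : (N : ℝ) * ((N : ℝ) - 1) = (N.choose 2 : ℝ) * 2 := by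
      have h := congrArg (Nat.cast : ℕ → ℝ) e3
      push_cast [Nat.cast_sub hN] at h
      linarith
    rw [hMval k hk1, if_pos hk2, hT2, hP, hSσ, hM1, hρbar]
    set B := ((N - 1).choose (k - 1) : ℝ)
    set D := ((N - 2).choose (k - 2) : ℝ)
    set A := (N.choose k : ℝ)
    set χ := (N.choose 2 : ℝ)
    have key2 : B * ((N : ℝ) * σbar2) + D * (2 * (χ * cbar))
        = (k : ℝ) * A * σbar2 + (k : ℝ) * ((k : ℝ) - 1) * A * cbar := by
      have hD : D * (2 * χ) = (k : ℝ) * ((k : ℝ) - 1) * A := by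
        linear_combination ((k : ℝ) - 1) * E1 + (N : ℝ) * E2 - D * E3
      linear_combination σbar2 * E1 + cbar * hD
    rw [key2]
    field_simp
  · -- k = 1
    have hk : k = 1 := by omega
    subst hk
    rw [hM1, div_self hpos.ne']
    norm_num
end

section
/- Let 1 ≤ k ≤ N−1 and assume σ̄² > 0. Then the change in the k-average mean squared error satisfies DMSE(k) := MSE(k) − MSE(k+1) = σ̄²·(1 − ρ̄)/(k(k+1)). -/
open MeasureTheory Finset

lemma card_filter_mem' {α : Type*} [DecidableEq α] (s : Finset α) (k : ℕ) (hk : 1 ≤ k)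
    (i : α) (hi : i ∈ s) :
    ((s.powersetCard k).filter (fun g => i ∈ g)).card = (s.card - 1).choose (k - 1) := by
  rw [← Finset.card_erase_of_mem hi, ← Finset.card_powersetCard]
  apply Finset.card_bij (fun g _ => g.erase i)
  · intro g hg
    simp only [mem_filter, Finset.mem_powersetCard] at hg
    rw [Finset.mem_powersetCard]
    exact ⟨Finset.erase_subset_erase _ hg.1.1,
      by rw [Finset.card_erase_of_mem hg.2, hg.1.2]⟩
  · intro g hg g' hg' h
    simp only [mem_filter] at hg hg'
    rw [← Finset.insert_erase hg.2, h, Finset.insert_erase hg'.2]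
  · intro t ht
    rw [Finset.mem_powersetCard] at ht
    have hit : i ∉ t := fun h => (Finset.mem_erase.1 (ht.1 h)).1 rfl
    refine ⟨insert i t, ?_, ?_⟩
    · simp only [mem_filter, Finset.mem_powersetCard]
      refine ⟨⟨?_, ?_⟩, Finset.mem_insert_self i t⟩
      · exact Finset.insert_subset hi (ht.1.trans (Finset.erase_subset _ _))
      · rw [Finset.card_insert_of_notMem hit, ht.2]
        omega
    · rw [Finset.erase_insert hit]

lemma card_filter_pair' {α : Type*} [DecidableEq α] (s : Finset α) (k : ℕ) (hk : 2 ≤ k)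
    (i j : α) (hij : i ≠ j) (hi : i ∈ s) (hj : j ∈ s) :
    ((s.powersetCard k).filter (fun g => i ∈ g ∧ j ∈ g)).card
      = (s.card - 2).choose (k - 2) := by
  have h1 : (((s.erase i).powersetCard (k - 1)).filter (fun g => j ∈ g)).card
      = ((s.erase i).card - 1).choose ((k - 1) - 1) :=
    card_filter_mem' (s.erase i) (k - 1) (by omega) j (Finset.mem_erase.2 ⟨Ne.symm hij, hj⟩)
  rw [Finset.card_erase_of_mem hi] at h1
  have h2 : s.card - 1 - 1 = s.card - 2 := by omega
  have h3 : k - 1 - 1 = k - 2 := by omega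
  rw [h2, h3] at h1
  rw [← h1]
  apply Finset.card_bij (fun g _ => g.erase i)
  · intro g hg
    simp only [mem_filter, Finset.mem_powersetCard] at hg ⊢
    refine ⟨⟨Finset.erase_subset_erase _ hg.1.1, ?_⟩, Finset.mem_erase.2 ⟨fun h => hij h.symm, hg.2.2⟩⟩
    rw [Finset.card_erase_of_mem hg.2.1, hg.1.2]
  · intro g hg g' hg' h
    simp only [mem_filter] at hg hg'
    rw [← Finset.insert_erase hg.2.1, h, Finset.insert_erase hg'.2.1]
  · intro t ht
    simp only [mem_filter, Finset.mem_powersetCard] at ht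
    have hit : i ∉ t := fun h => (Finset.mem_erase.1 (ht.1.1 h)).1 rfl
    refine ⟨insert i t, ?_, Finset.erase_insert hit⟩
    simp only [mem_filter, Finset.mem_powersetCard]
    refine ⟨⟨Finset.insert_subset hi (ht.1.1.trans (Finset.erase_subset _ _)), ?_⟩,
      Finset.mem_insert_self i t, Finset.mem_insert_of_mem ht.2⟩
    rw [Finset.card_insert_of_notMem hit, ht.1.2]
    omega

lemma choose_id1 (n k : ℕ) (hk : 1 ≤ k) (hn : 1 ≤ n) :
    (n - 1).choose (k - 1) * n = n.choose k * k := by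
  have := Nat.add_one_mul_choose_eq (n - 1) (k - 1)
  have h1 : n - 1 + 1 = n := by omega
  have h2 : k - 1 + 1 = k := by omega
  rw [h1, h2] at this
  rw [Nat.mul_comm]
  exact this

lemma choose_id2 (n k : ℕ) (hk : 2 ≤ k) (hn : 2 ≤ n) :
    (n - 2).choose (k - 2) * (n * (n - 1)) = n.choose k * (k * (k - 1)) := by
  have a : (n - 2).choose (k - 2) * (n - 1) = (n - 1).choose (k - 1) * (k - 1) := by
    have := choose_id1 (n - 1) (k - 1) (by omega) (by omega)
    rw [show n - 1 - 1 = n - 2 by omega, show k - 1 - 1 = k - 2 by omega] at this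
    exact this
  have b := choose_id1 n k (by omega) (by omega)
  calc (n - 2).choose (k - 2) * (n * (n - 1))
      = ((n - 2).choose (k - 2) * (n - 1)) * n := by ring
    _ = ((n - 1).choose (k - 1) * (k - 1)) * n := by rw [a]
    _ = ((n - 1).choose (k - 1) * n) * (k - 1) := by ring
    _ = (n.choose k * k) * (k - 1) := by rw [b]
    _ = n.choose k * (k * (k - 1)) := by ring

lemma card_filter_pair_small {α : Type*} [DecidableEq α] (s : Finset α) (k : ℕ) (hk : k ≤ 1)
    (i j : α) (hij : i ≠ j) :
    ((s.powersetCard k).filter (fun g => i ∈ g ∧ j ∈ g)).card = 0 := by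
  rw [Finset.card_eq_zero, Finset.filter_eq_empty_iff]
  rintro g hg ⟨hi, hj⟩
  rw [Finset.mem_powersetCard] at hg
  have : ({i, j} : Finset α) ⊆ g := by
    intro x hx
    rcases Finset.mem_insert.1 hx with h | h
    · exact h ▸ hi
    · exact (Finset.mem_singleton.1 h) ▸ hj
  have h2 : ({i, j} : Finset α).card = 2 := Finset.card_pair hij
  have := Finset.card_le_card this
  omega

lemma int_sq_sum {Ω : Type*} [MeasurableSpace Ω] (μ : Measure Ω) {N : ℕ}
    (e : Fin N → Ω → ℝ) (hL2 : ∀ i, MemLp (e i) 2 μ) (g : Finset (Fin N)) :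
    ∫ ω, (∑ i ∈ g, e i ω) ^ 2 ∂μ = ∑ i ∈ g, ∑ j ∈ g, ∫ ω, e i ω * e j ω ∂μ := by
  have hint : ∀ i j : Fin N, Integrable (fun ω => e i ω * e j ω) μ := by
    intro i j
    have h := (hL2 j).smul (hL2 i) (p := 2) (q := 2) (r := 1)
    rw [← memLp_one_iff_integrable]
    exact h
  have hptw : ∀ ω, (∑ i ∈ g, e i ω) ^ 2 = ∑ i ∈ g, ∑ j ∈ g, e i ω * e j ω := by
    intro ω
    rw [sq, Finset.sum_mul_sum]
  simp_rw [hptw]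
  rw [integral_finset_sum _ (fun i _ => integrable_finset_sum _ (fun j _ => hint i j))]
  exact Finset.sum_congr rfl fun i _ =>
    integral_finset_sum _ (fun j _ => hint i j)

lemma sum_powersetCard_double {α : Type*} [DecidableEq α] [Fintype α] (T : α → α → ℝ) (k : ℕ) :
    ∑ g ∈ (Finset.univ : Finset α).powersetCard k, ∑ i ∈ g, ∑ j ∈ g, T i j
      = ∑ i, ∑ j,
          (((((Finset.univ : Finset α).powersetCard k)).filter
            (fun g => i ∈ g ∧ j ∈ g)).card : ℝ) * T i j := by
  have h1 : ∀ g : Finset α, ∑ i ∈ g, ∑ j ∈ g, T i j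
      = ∑ i, ∑ j, if i ∈ g ∧ j ∈ g then T i j else 0 := by
    intro g
    calc ∑ i ∈ g, ∑ j ∈ g, T i j
        = ∑ i, if i ∈ g then ∑ j ∈ g, T i j else 0 := by
          rw [Finset.sum_ite_mem, Finset.univ_inter]
      _ = ∑ i, ∑ j, if i ∈ g ∧ j ∈ g then T i j else 0 := by
          refine Finset.sum_congr rfl fun i _ => ?_
          by_cases hi : i ∈ g
          · simp only [hi, if_true, true_and]
            rw [Finset.sum_ite_mem, Finset.univ_inter]
          · simp [hi]
  simp_rw [h1]
  rw [Finset.sum_comm]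
  refine Finset.sum_congr rfl fun i _ => ?_
  rw [Finset.sum_comm]
  refine Finset.sum_congr rfl fun j _ => ?_
  rw [Finset.sum_ite, Finset.sum_const, Finset.sum_const_zero, add_zero, nsmul_eq_mul]


/-- The change in the k-average MSE satisfies
`DMSE(k) = MSE(k) − MSE(k+1) = σ̄²·(1 − ρ̄)/(k(k+1))`. -/
theorem stmt4
    {Ω : Type*} [MeasurableSpace Ω] (μ : Measure Ω) [IsProbabilityMeasure μ]
    (N : ℕ) (hN : 2 ≤ N) (e : Fin N → Ω → ℝ)
    (hL2 : ∀ i, MemLp (e i) 2 μ)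
    (hmean : ∀ i, ∫ ω, e i ω ∂μ = 0)
    (σ2 : Fin N → ℝ) (hσ2 : ∀ i, σ2 i = ∫ ω, (e i ω) ^ 2 ∂μ)
    (c : Fin N → Fin N → ℝ) (hc : ∀ i j, i ≠ j → c i j = ∫ ω, e i ω * e j ω ∂μ)
    (σbar2 : ℝ) (hσbar2 : σbar2 = (1 / (N : ℝ)) * ∑ i, σ2 i)
    (cbar : ℝ)
    (hcbar : cbar = (1 / (N.choose 2 : ℝ)) * ∑ i, ∑ j, if i < j then c i j else 0)
    (ρbar : ℝ) (hρbar : ρbar = cbar / σbar2)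
    (hpos : 0 < σbar2)
    (MSE : ℕ → ℝ)
    (hMSE : ∀ k, MSE k = (1 / (N.choose k : ℝ)) *
      ∑ g ∈ Finset.powersetCard k (Finset.univ : Finset (Fin N)),
        ∫ ω, ((1 / (k : ℝ)) * ∑ i ∈ g, e i ω) ^ 2 ∂μ)
    (DMSE : ℕ → ℝ) (hDMSE : ∀ k, DMSE k = MSE k - MSE (k + 1))
    (k : ℕ) (hk1 : 1 ≤ k) (hkN : k ≤ N - 1) :
    DMSE k = σbar2 * (1 - ρbar) / ((k : ℝ) * ((k : ℝ) + 1)) := by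
  classical
  have hN1R : (N : ℝ) ≠ 0 := Nat.cast_ne_zero.2 (by omega)
  have hN2R : (2 : ℝ) ≤ (N : ℝ) := by exact_mod_cast hN
  have hNm1R : (N : ℝ) - 1 ≠ 0 := by linarith
  have hTs : ∀ i j : Fin N, (∫ ω, e i ω * e j ω ∂μ) = ∫ ω, e j ω * e i ω ∂μ := by
    intro i j
    rw [show (fun ω => e i ω * e j ω) = fun ω => e j ω * e i ω from
      funext fun ω => mul_comm _ _]
  have hTdiag : ∀ i : Fin N, (∫ ω, e i ω * e i ω ∂μ) = σ2 i := by
    intro i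
    rw [hσ2 i]
    rw [show (fun ω => e i ω * e i ω) = fun ω => (e i ω) ^ 2 from
      funext fun ω => (pow_two (e i ω)).symm]
  have key : ∀ m : ℕ, 1 ≤ m → m ≤ N →
      MSE m = σbar2 / m + ((m : ℝ) - 1) / m * cbar := by
    intro m hm1 hmN
    have hmR : (m : ℝ) ≠ 0 := Nat.cast_ne_zero.2 (by omega)
    have hCm : (N.choose m : ℝ) ≠ 0 := Nat.cast_ne_zero.2 (Nat.choose_pos hmN).ne'
    have step1 : ∀ g : Finset (Fin N),
        ∫ ω, ((1 / (m : ℝ)) * ∑ i ∈ g, e i ω) ^ 2 ∂μ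
          = (1 / (m : ℝ)) ^ 2 * ∑ i ∈ g, ∑ j ∈ g, ∫ ω, e i ω * e j ω ∂μ := by
      intro g
      simp_rw [mul_pow]
      rw [integral_const_mul, int_sq_sum μ e hL2 g]
    have hd := sum_powersetCard_double (fun i j => (∫ ω, e i ω * e j ω ∂μ)) m
    have hMSE2 : MSE m = (1 / (N.choose m : ℝ)) * ((1 / (m : ℝ)) ^ 2 *
        ∑ i, ∑ j,
          (((((Finset.univ : Finset (Fin N)).powersetCard m).filter
            (fun g => i ∈ g ∧ j ∈ g)).card : ℝ) * ∫ ω, e i ω * e j ω ∂μ)) := by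
      rw [hMSE m, Finset.sum_congr rfl fun g _ => step1 g, ← Finset.mul_sum, hd]
    -- diagonal counts
    have hdiagcnt : ∀ i : Fin N,
        ((((Finset.univ : Finset (Fin N)).powersetCard m).filter
          (fun g => i ∈ g ∧ i ∈ g)).card) = (N - 1).choose (m - 1) := by
      intro i
      rw [Finset.filter_congr (fun g _ => and_self_iff (a := i ∈ g))]
      have := card_filter_mem' (Finset.univ : Finset (Fin N)) m hm1 i (Finset.mem_univ i)
      rwa [Finset.card_univ, Fintype.card_fin] at this
    -- off-diagonal counts
    have hpaircnt : ∀ i j : Fin N, i ≠ j →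
        (((((Finset.univ : Finset (Fin N)).powersetCard m).filter
          (fun g => i ∈ g ∧ j ∈ g)).card : ℝ))
          = (N.choose m : ℝ) * ((m : ℝ) * ((m : ℝ) - 1)) / ((N : ℝ) * ((N : ℝ) - 1)) := by
      intro i j hij
      have hnat : ((((Finset.univ : Finset (Fin N)).powersetCard m).filter
          (fun g => i ∈ g ∧ j ∈ g)).card) * (N * (N - 1))
            = N.choose m * (m * (m - 1)) := by
        by_cases h2 : 2 ≤ m
        · rw [card_filter_pair' _ m h2 i j hij (Finset.mem_univ i) (Finset.mem_univ j),
            Finset.card_univ, Fintype.card_fin]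
          exact choose_id2 N m h2 hN
        · have hm : m = 1 := by omega
          subst hm
          rw [card_filter_pair_small _ 1 le_rfl i j hij]
          simp
      have hcast := congrArg (Nat.cast (R := ℝ)) hnat
      push_cast [Nat.cast_sub (show 1 ≤ N by omega), Nat.cast_sub hm1] at hcast
      rw [eq_div_iff (mul_ne_zero hN1R hNm1R)]
      exact hcast
    -- the double sum
    have hsum : (∑ i, ∑ j,
          (((((Finset.univ : Finset (Fin N)).powersetCard m).filter
            (fun g => i ∈ g ∧ j ∈ g)).card : ℝ) * ∫ ω, e i ω * e j ω ∂μ))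
        = ((N - 1).choose (m - 1) : ℝ) * ∑ i, σ2 i
          + (N.choose m : ℝ) * ((m : ℝ) * ((m : ℝ) - 1)) / ((N : ℝ) * ((N : ℝ) - 1))
            * ∑ i, ∑ j ∈ Finset.univ.erase i, ∫ ω, e i ω * e j ω ∂μ := by
      have hrow : ∀ i : Fin N, (∑ j,
            (((((Finset.univ : Finset (Fin N)).powersetCard m).filter
              (fun g => i ∈ g ∧ j ∈ g)).card : ℝ) * ∫ ω, e i ω * e j ω ∂μ))
          = ((N - 1).choose (m - 1) : ℝ) * σ2 i
            + (N.choose m : ℝ) * ((m : ℝ) * ((m : ℝ) - 1)) / ((N : ℝ) * ((N : ℝ) - 1))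
              * ∑ j ∈ Finset.univ.erase i, ∫ ω, e i ω * e j ω ∂μ := by
        intro i
        rw [← Finset.add_sum_erase _ _ (Finset.mem_univ i)]
        congr 1
        · rw [hdiagcnt i, hTdiag i]
        · rw [Finset.mul_sum]
          refine Finset.sum_congr rfl fun j hj => ?_
          rw [hpaircnt i j (Ne.symm (Finset.mem_erase.1 hj).1)]
      rw [Finset.sum_congr rfl fun i _ => hrow i, Finset.sum_add_distrib,
        ← Finset.mul_sum, ← Finset.mul_sum]
    -- the off-diagonal sum in terms of cbar
    have hB : (∑ i, ∑ j ∈ Finset.univ.erase i, ∫ ω, e i ω * e j ω ∂μ)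
        = ((N : ℝ) * ((N : ℝ) - 1)) * cbar := by
      have hsplit2 : ∀ i j : Fin N, (if j ≠ i then (∫ ω, e i ω * e j ω ∂μ) else 0)
          = (if i < j then (∫ ω, e i ω * e j ω ∂μ) else 0)
            + (if j < i then (∫ ω, e i ω * e j ω ∂μ) else 0) := by
        intro i j
        rcases lt_trichotomy i j with h | h | h
        · rw [if_pos h.ne', if_pos h, if_neg (asymm h), add_zero]
        · subst h; simp
        · rw [if_pos h.ne, if_neg (asymm h), if_pos h, zero_add]
      have h1 : ∀ i : Fin N, (∑ j ∈ Finset.univ.erase i, ∫ ω, e i ω * e j ω ∂μ)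
          = ∑ j, if j ≠ i then (∫ ω, e i ω * e j ω ∂μ) else 0 := by
        intro i
        rw [← Finset.filter_ne', Finset.sum_filter]
      have hch2 : (N.choose 2) * 2 = N * (N - 1) := by
        have := choose_id2 N 2 le_rfl hN
        simpa using this.symm
      have hch2R : ((N.choose 2 : ℕ) : ℝ) * 2 = (N : ℝ) * ((N : ℝ) - 1) := by
        have hcast := congrArg (Nat.cast (R := ℝ)) hch2
        push_cast [Nat.cast_sub (show 1 ≤ N by omega)] at hcast
        exact hcast
      have hchne : ((N.choose 2 : ℕ) : ℝ) ≠ 0 :=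
        Nat.cast_ne_zero.2 (Nat.choose_pos hN).ne'
      calc (∑ i, ∑ j ∈ Finset.univ.erase i, ∫ ω, e i ω * e j ω ∂μ)
          = ∑ i, ∑ j, ((if i < j then (∫ ω, e i ω * e j ω ∂μ) else 0)
              + (if j < i then (∫ ω, e i ω * e j ω ∂μ) else 0)) := by
            refine Finset.sum_congr rfl fun i _ => ?_
            rw [h1 i]
            exact Finset.sum_congr rfl fun j _ => hsplit2 i j
        _ = (∑ i, ∑ j, if i < j then (∫ ω, e i ω * e j ω ∂μ) else 0)
              + ∑ i, ∑ j, if j < i then (∫ ω, e i ω * e j ω ∂μ) else 0 := by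
            rw [← Finset.sum_add_distrib]
            exact Finset.sum_congr rfl fun i _ => Finset.sum_add_distrib
        _ = 2 * ∑ i, ∑ j, if i < j then (∫ ω, e i ω * e j ω ∂μ) else 0 := by
            have hsw : (∑ i, ∑ j, if j < i then (∫ ω, e i ω * e j ω ∂μ) else 0)
                = ∑ i, ∑ j, if i < j then (∫ ω, e i ω * e j ω ∂μ) else 0 := by
              rw [Finset.sum_comm]
              exact Finset.sum_congr rfl fun i _ =>
                Finset.sum_congr rfl fun j _ => by rw [hTs]
            rw [hsw]; ring
        _ = 2 * ∑ i, ∑ j, if i < j then c i j else 0 := by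
            congr 1
            refine Finset.sum_congr rfl fun i _ => Finset.sum_congr rfl fun j _ => ?_
            by_cases h : i < j
            · rw [if_pos h, if_pos h, hc i j h.ne]
            · rw [if_neg h, if_neg h]
        _ = ((N : ℝ) * ((N : ℝ) - 1)) * cbar := by
            rw [hcbar, ← hch2R]
            field_simp
    -- diagonal coefficient identity
    have hc1R : (((N - 1).choose (m - 1) : ℕ) : ℝ) = (N.choose m : ℝ) * m / N := by
      have hnat := choose_id1 N m hm1 (by omega)
      have hcast := congrArg (Nat.cast (R := ℝ)) hnat
      push_cast at hcast
      rw [eq_div_iff hN1R]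
      exact hcast
    have hA : (∑ i, σ2 i) = (N : ℝ) * σbar2 := by
      rw [hσbar2]; field_simp
    rw [hMSE2, hsum, hB, hA, hc1R]
    field_simp
  have h1 := key k hk1 (by omega)
  have h2 := key (k + 1) (by omega) (by omega)
  push_cast at h2
  rw [hDMSE, h1, h2, hρbar]
  have hkR : (k : ℝ) ≠ 0 := Nat.cast_ne_zero.2 (by omega)
  have hk1R : (k : ℝ) + 1 ≠ 0 := by positivity
  have hσ : σbar2 ≠ 0 := ne_of_gt hpos
  field_simp
  ring
end

section
/- Let N ≥ 2, −1/(N−1) < ρ < 1, σ > 0, and Σ = σ²·R(ρ). Then for every λ ∈ ℝᴺ with Σ_{i=1}^N λ_i = 1, we have λᵀΣλ ≥ μᵀΣμ where μ = (1/N)·ι; that is, the equal-weight vector minimizes the combined-forecast error variance among all weight vectors summing to one. -/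
open Matrix

/-- Under equicorrelation, among all weight vectors summing to one, the equal-weight
vector `μ = (1/N)·ι` minimizes the combined-forecast error variance `λᵀΣλ`. -/
theorem stmt11 (N : ℕ) (hN : 2 ≤ N) (ρ σ : ℝ)
    (h1 : -1 / ((N : ℝ) - 1) < ρ) (h2 : ρ < 1) (hσ : 0 < σ)
    (R : Matrix (Fin N) (Fin N) ℝ)
    (hR : R = Matrix.of fun i j => if i = j then (1 : ℝ) else ρ)
    (S : Matrix (Fin N) (Fin N) ℝ) (hS : S = σ ^ 2 • R)
    (ι : Fin N → ℝ) (hι : ι = fun _ => 1)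
    (μ : Fin N → ℝ) (hμ : μ = (1 / (N : ℝ)) • ι) :
    ∀ lam : Fin N → ℝ, (∑ i, lam i) = 1 →
      μ ⬝ᵥ (S *ᵥ μ) ≤ lam ⬝ᵥ (S *ᵥ lam) := by
  intro lam hlam
  subst hR hS hι hμ
  have hN0 : (0 : ℝ) < (N : ℝ) := by positivity
  have quad : ∀ v : Fin N → ℝ,
      v ⬝ᵥ ((σ ^ 2 • Matrix.of fun i j => if i = j then (1 : ℝ) else ρ) *ᵥ v)
        = σ ^ 2 * ((1 - ρ) * ∑ i, (v i) ^ 2 + ρ * (∑ i, v i) ^ 2) := by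
    intro v
    simp only [dotProduct, mulVec, Matrix.smul_apply, Matrix.of_apply, smul_eq_mul]
    have hrow : ∀ i : Fin N, (∑ j, σ ^ 2 * (if i = j then (1 : ℝ) else ρ) * v j)
        = σ ^ 2 * ((1 - ρ) * v i + ρ * ∑ j, v j) := by
      intro i
      have : ∀ j : Fin N, σ ^ 2 * (if i = j then (1 : ℝ) else ρ) * v j
          = (if i = j then σ ^ 2 * (1 - ρ) * v j else 0) + σ ^ 2 * ρ * v j := by
        intro j
        by_cases h : i = j <;> simp [h] <;> ring
      rw [Finset.sum_congr rfl fun j _ => this j, Finset.sum_add_distrib,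
        Finset.sum_ite_eq, if_pos (Finset.mem_univ i), ← Finset.mul_sum]
      ring
    calc (∑ i, v i * ∑ j, σ ^ 2 * (if i = j then (1 : ℝ) else ρ) * v j)
        = ∑ i, (σ ^ 2 * (1 - ρ) * (v i) ^ 2 + σ ^ 2 * ρ * (∑ j, v j) * v i) := by
          refine Finset.sum_congr rfl fun i _ => ?_
          rw [hrow i]; ring
      _ = σ ^ 2 * ((1 - ρ) * ∑ i, (v i) ^ 2 + ρ * (∑ i, v i) ^ 2) := by
          rw [Finset.sum_add_distrib, ← Finset.mul_sum, ← Finset.mul_sum]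
          ring
  rw [quad, quad]
  have hsum_mu : (∑ i : Fin N, ((1 / (N : ℝ)) • fun _ : Fin N => (1 : ℝ)) i) = 1 := by
    simp [Finset.sum_const, Finset.card_univ]
    field_simp
  have hsq_mu : (∑ i : Fin N, (((1 / (N : ℝ)) • fun _ : Fin N => (1 : ℝ)) i) ^ 2)
      = 1 / (N : ℝ) := by
    simp [Finset.sum_const, Finset.card_univ]
    field_simp
  rw [hsum_mu, hsq_mu, hlam]
  have key : 1 / (N : ℝ) ≤ ∑ i, (lam i) ^ 2 := by
    have h0 : (0 : ℝ) ≤ ∑ i, (lam i - 1 / (N : ℝ)) ^ 2 :=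
      Finset.sum_nonneg fun i _ => sq_nonneg _
    have hexp : (∑ i, (lam i - 1 / (N : ℝ)) ^ 2)
        = (∑ i, (lam i) ^ 2) - 2 * (1 / (N : ℝ)) * (∑ i, lam i)
          + (N : ℝ) * (1 / (N : ℝ)) ^ 2 := by
      have he : ∀ i : Fin N, (lam i - 1 / (N : ℝ)) ^ 2
          = (lam i) ^ 2 - 2 * (1 / (N : ℝ)) * lam i + (1 / (N : ℝ)) ^ 2 := fun i => by ring
      rw [Finset.sum_congr rfl fun i _ => he i, Finset.sum_add_distrib,
        Finset.sum_sub_distrib, ← Finset.mul_sum, Finset.sum_const,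
        Finset.card_univ, Fintype.card_fin, nsmul_eq_mul]
    rw [hexp, hlam] at h0
    have : (N : ℝ) * (1 / (N : ℝ)) ^ 2 = 1 / (N : ℝ) := by field_simp
    nlinarith
  have h1ρ : (0 : ℝ) < 1 - ρ := by linarith
  have hσ2 : (0 : ℝ) < σ ^ 2 := by positivity
  nlinarith [mul_nonneg (mul_pos hσ2 h1ρ).le (sub_nonneg.2 key)]
end

section
/- Let N ≥ 2, −1/(N−1) < ρ < 1, let σ_1,…,σ_N > 0, let D = diag(σ_1,…,σ_N), and let Σ = D·R(ρ)·D (the weak equicorrelation covariance matrix). Then ιᵀΣ⁻¹ι = ((1+(N−1)ρ)·Σ_{i=1}^N σ_i⁻² − ρ·(Σ_{i=1}^N σ_i⁻¹)²) / ((1−ρ)(1+(N−1)ρ)). -/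
/-!
Since `R(ρ) = (1 - ρ) I + ρ ι ιᵀ`, the system `R(ρ) v = w` has the explicit solution
`v = (w - ρ (∑ wⱼ) / (1 + (N - 1) ρ) • ι) / (1 - ρ)`, so `R(ρ)` is invertible and
`wᵀ R(ρ)⁻¹ w` is a closed expression in `∑ wᵢ²` and `∑ wᵢ`. Conjugating by `D` reduces
`ιᵀ Σ⁻¹ ι` to this quadratic form at `w = D⁻¹ ι = (σᵢ⁻¹)ᵢ`.
-/

open Matrix

namespace Matrix

variable {n K : Type*} [Fintype n] [DecidableEq n] [Field K]

def equicorrelation (ρ : K) : Matrix n n K :=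
  of fun i j => if i = j then 1 else ρ

theorem equicorrelation_mulVec (ρ : K) (v : n → K) :
    equicorrelation ρ *ᵥ v = fun i => (1 - ρ) * v i + ρ * ∑ j, v j := by
  ext i
  have hsplit : ∀ j,
      (if i = j then 1 else ρ) * v j = ρ * v j + if i = j then (1 - ρ) * v j else 0 := fun j => by
    split_ifs <;> ring
  simp only [mulVec, dotProduct, equicorrelation, of_apply, hsplit, Finset.sum_add_distrib,
    Finset.sum_ite_eq, Finset.mem_univ, if_true, ← Finset.mul_sum]
  ring

variable {ρ : K}

theorem equicorrelation_mulVec_solution (hρ : 1 - ρ ≠ 0)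
    (hc : 1 + ((Fintype.card n : K) - 1) * ρ ≠ 0) (w : n → K) :
    equicorrelation ρ *ᵥ
      (fun i => (w i - ρ * (∑ j, w j) / (1 + ((Fintype.card n : K) - 1) * ρ)) / (1 - ρ)) = w := by
  set c := 1 + ((Fintype.card n : K) - 1) * ρ with hc_def
  ext i
  rw [equicorrelation_mulVec, ← Finset.sum_div, Finset.sum_sub_distrib, Finset.sum_const,
    Finset.card_univ, nsmul_eq_mul]
  field_simp
  linear_combination (ρ * ∑ j, w j) * hc_def

theorem isUnit_equicorrelation (hρ : 1 - ρ ≠ 0)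
    (hc : 1 + ((Fintype.card n : K) - 1) * ρ ≠ 0) : IsUnit (equicorrelation ρ : Matrix n n K) :=
  mulVec_surjective_iff_isUnit.mp fun w => ⟨_, equicorrelation_mulVec_solution hρ hc w⟩

theorem dotProduct_equicorrelation_inv_mulVec (hρ : 1 - ρ ≠ 0)
    (hc : 1 + ((Fintype.card n : K) - 1) * ρ ≠ 0) (w : n → K) :
    w ⬝ᵥ ((equicorrelation ρ)⁻¹ *ᵥ w) =
      ((1 + ((Fintype.card n : K) - 1) * ρ) * ∑ i, w i ^ 2 - ρ * (∑ i, w i) ^ 2) /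
        ((1 - ρ) * (1 + ((Fintype.card n : K) - 1) * ρ)) := by
  set c := 1 + ((Fintype.card n : K) - 1) * ρ
  have hdet := (isUnit_iff_isUnit_det _).mp (isUnit_equicorrelation hρ hc)
  have hsol : (equicorrelation ρ)⁻¹ *ᵥ w = fun i => (w i - ρ * (∑ j, w j) / c) / (1 - ρ) := by
    conv_lhs => rw [← equicorrelation_mulVec_solution hρ hc w]
    rw [mulVec_mulVec, nonsing_inv_mul _ hdet, one_mulVec]
  simp only [hsol, dotProduct, mul_div_assoc', ← Finset.sum_div, mul_sub, Finset.sum_sub_distrib,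
    ← Finset.sum_mul, sq]
  field_simp

theorem dotProduct_inv_diagonal_mul_mul_diagonal_mulVec (A : Matrix n n K)
    {d : n → K} (hd : ∀ i, d i ≠ 0) (v : n → K) :
    v ⬝ᵥ ((diagonal d * A * diagonal d)⁻¹ *ᵥ v) = (d⁻¹ * v) ⬝ᵥ (A⁻¹ *ᵥ (d⁻¹ * v)) := by
  have hinv : (diagonal d)⁻¹ = diagonal d⁻¹ := by
    refine inv_eq_left_inv ?_
    rw [diagonal_mul_diagonal, ← diagonal_one]
    exact congrArg diagonal (funext fun i => inv_mul_cancel₀ (hd i))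
  have hdiag : ∀ u, diagonal d⁻¹ *ᵥ u = d⁻¹ * u := fun u => funext (mulVec_diagonal _ u)
  rw [mul_inv_rev, mul_inv_rev, hinv, ← mulVec_mulVec, ← mulVec_mulVec, hdiag, hdiag]
  exact Finset.sum_congr rfl fun i _ => by simp only [Pi.mul_apply]; ring

end Matrix

/-- Weak equicorrelation: with `Σ = D·R(ρ)·D`, `D = diag(σ_1,…,σ_N)`,
`ιᵀΣ⁻¹ι = ((1+(N−1)ρ)·Σσᵢ⁻² − ρ·(Σσᵢ⁻¹)²)/((1−ρ)(1+(N−1)ρ))`. -/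
theorem stmt12 (N : ℕ) (hN : 2 ≤ N) (ρ : ℝ)
    (h1 : -1 / ((N : ℝ) - 1) < ρ) (h2 : ρ < 1)
    (σ : Fin N → ℝ) (hσ : ∀ i, 0 < σ i)
    (R : Matrix (Fin N) (Fin N) ℝ)
    (hR : R = Matrix.of fun i j => if i = j then (1 : ℝ) else ρ)
    (D : Matrix (Fin N) (Fin N) ℝ) (hD : D = Matrix.diagonal σ)
    (S : Matrix (Fin N) (Fin N) ℝ) (hS : S = D * R * D)
    (ι : Fin N → ℝ) (hι : ι = fun _ => 1) :
    ι ⬝ᵥ (S⁻¹ *ᵥ ι) =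
      ((1 + ((N : ℝ) - 1) * ρ) * (∑ i, (σ i) ^ (-2 : ℤ)) -
        ρ * (∑ i, (σ i)⁻¹) * (∑ i, (σ i)⁻¹)) /
      ((1 - ρ) * (1 + ((N : ℝ) - 1) * ρ)) := by
  have hN1 : (0 : ℝ) < N - 1 := by
    have : (2 : ℝ) ≤ N := by exact_mod_cast hN
    linarith
  have hρ : 1 - ρ ≠ 0 := sub_ne_zero.mpr h2.ne'
  have hc : 1 + ((Fintype.card (Fin N) : ℝ) - 1) * ρ ≠ 0 := by
    rw [Fintype.card_fin]
    have := (div_lt_iff₀ hN1).mp h1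
    nlinarith
  rw [hS, hD, hR, hι, dotProduct_inv_diagonal_mul_mul_diagonal_mulVec _ fun i => (hσ i).ne',
    ← equicorrelation, dotProduct_equicorrelation_inv_mulVec hρ hc, Fintype.card_fin]
  simp only [Pi.mul_apply, Pi.inv_apply, mul_one, _root_.zpow_neg, zpow_two, mul_inv, sq]
  ring
end

section
/- Let N ≥ 2, −1/(N−1) < ρ < 1, let σ_1,…,σ_N > 0, let D = diag(σ_1,…,σ_N), and let Σ = D·R(ρ)·D. Then Σ⁻¹ι = ((1+(N−1)ρ)·v − ρ·(Σ_{i=1}^N σ_i⁻¹)·u) / ((1−ρ)(1+(N−1)ρ)), where v ∈ ℝᴺ has components v_i = σ_i⁻² and u ∈ ℝᴺ has components u_i = σ_i⁻¹. -/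
open Matrix

/-- Weak equicorrelation: with `Σ = D·R(ρ)·D`,
`Σ⁻¹ι = ((1+(N−1)ρ)·v − ρ·(Σσᵢ⁻¹)·u)/((1−ρ)(1+(N−1)ρ))`,
where `v_i = σ_i⁻²` and `u_i = σ_i⁻¹`. -/
theorem stmt13 (N : ℕ) (hN : 2 ≤ N) (ρ : ℝ)
    (h1 : -1 / ((N : ℝ) - 1) < ρ) (h2 : ρ < 1)
    (σ : Fin N → ℝ) (hσ : ∀ i, 0 < σ i)
    (R : Matrix (Fin N) (Fin N) ℝ)
    (hR : R = Matrix.of fun i j => if i = j then (1 : ℝ) else ρ)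
    (D : Matrix (Fin N) (Fin N) ℝ) (hD : D = Matrix.diagonal σ)
    (S : Matrix (Fin N) (Fin N) ℝ) (hS : S = D * R * D)
    (ι : Fin N → ℝ) (hι : ι = fun _ => 1)
    (v : Fin N → ℝ) (hv : v = fun i => (σ i) ^ (-2 : ℤ))
    (u : Fin N → ℝ) (hu : u = fun i => (σ i)⁻¹) :
    S⁻¹ *ᵥ ι = fun i =>
      ((1 + ((N : ℝ) - 1) * ρ) * v i - ρ * (∑ j, (σ j)⁻¹) * u i) /
        ((1 - ρ) * (1 + ((N : ℝ) - 1) * ρ)) := by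
  have hN1 : (0:ℝ) < (N : ℝ) - 1 := by
    have : (2:ℝ) ≤ (N:ℝ) := by exact_mod_cast hN
    linarith
  have h1' : -1 < ρ * ((N:ℝ) - 1) := (div_lt_iff₀ hN1).mp h1
  have hpos : 0 < 1 + ((N:ℝ) - 1) * ρ := by nlinarith
  have hden : (1 - ρ) * (1 + ((N:ℝ) - 1) * ρ) ≠ 0 :=
    ne_of_gt (mul_pos (by linarith) hpos)
  set den := (1 - ρ) * (1 + ((N:ℝ) - 1) * ρ) with hden_def
  set a := (1 + ((N:ℝ) - 2) * ρ) / den with ha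
  set b := -ρ / den with hb
  have hσ0 : ∀ i, σ i ≠ 0 := fun i => (hσ i).ne'
  set T : Matrix (Fin N) (Fin N) ℝ :=
    Matrix.of (fun i j => (σ i)⁻¹ * (σ j)⁻¹ * (if i = j then a else b)) with hT
  have hSentry : ∀ i j, S i j = σ i * (if i = j then (1:ℝ) else ρ) * σ j := by
    intro i j
    simp [hS, hD, hR, Matrix.diagonal_mul, Matrix.mul_diagonal]
  have hNcard : (Finset.univ : Finset (Fin N)).card = N := by simp
  have hST : S * T = 1 := by
    ext i k
    rw [Matrix.mul_apply]
    have hterm : ∀ j, S i j * T j k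
        = σ i * (σ k)⁻¹ * ((if i = j then (1:ℝ) else ρ) * (if j = k then a else b)) := by
      intro j
      rw [hSentry]
      simp only [hT, Matrix.of_apply]
      have hj := mul_inv_cancel₀ (hσ0 j)
      generalize (if i = j then (1:ℝ) else ρ) = x
      generalize (if j = k then a else b) = y
      linear_combination σ i * (σ k)⁻¹ * x * y * hj
    rw [Finset.sum_congr rfl (fun j _ => hterm j), ← Finset.mul_sum]
    by_cases hik : i = k
    · subst hik
      have key : ∀ j, (if i = j then (1:ℝ) else ρ) * (if j = i then a else b)
          = ρ * b + (if j = i then a - ρ * b else 0) := by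
        intro j
        by_cases h : j = i
        · subst h; simp
        · simp [h, Ne.symm h]
      rw [Finset.sum_congr rfl (fun j _ => key j)]
      rw [Finset.sum_add_distrib, Finset.sum_const, hNcard, Finset.sum_ite_eq' _ i]
      simp only [Finset.mem_univ, if_true, Matrix.one_apply_eq]
      rw [nsmul_eq_mul]
      have hsum : (N:ℝ) * (ρ * b) + (a - ρ * b) = 1 := by
        rw [ha, hb, hden_def]
        have hd' : (1 - ρ) * (1 + ((N:ℝ) - 1) * ρ) ≠ 0 := hden
        simp only [div_eq_mul_inv]
        linear_combination mul_inv_cancel₀ hd'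
      rw [hsum, mul_one, mul_inv_cancel₀ (hσ0 i)]
    · have key : ∀ j, (if i = j then (1:ℝ) else ρ) * (if j = k then a else b)
          = ρ * b + (if j = i then b - ρ * b else 0) + (if j = k then ρ * a - ρ * b else 0) := by
        intro j
        by_cases hji : j = i
        · subst hji
          simp [Ne.symm hik, hik]
        · by_cases hjk : j = k
          · subst hjk
            simp [hji, Ne.symm hji]
          · simp [hji, hjk, Ne.symm hji]
      rw [Finset.sum_congr rfl (fun j _ => key j)]
      rw [Finset.sum_add_distrib, Finset.sum_add_distrib, Finset.sum_const, hNcard,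
        Finset.sum_ite_eq' _ i, Finset.sum_ite_eq' _ k]
      simp only [Finset.mem_univ, if_true, Matrix.one_apply_ne hik]
      rw [nsmul_eq_mul]
      have hsum : (N:ℝ) * (ρ * b) + (b - ρ * b) + (ρ * a - ρ * b) = 0 := by
        rw [ha, hb, hden_def]
        field_simp
        ring
      rw [hsum, mul_zero]
  have hinv : S⁻¹ = T := Matrix.inv_eq_right_inv hST
  rw [hinv]
  funext i
  have hterm : ∀ j, T i j * ι j
      = (σ i)⁻¹ * (σ j)⁻¹ * b + (if j = i then (σ i)⁻¹ * (σ i)⁻¹ * (a - b) else 0) := by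
    intro j
    simp only [hT, Matrix.of_apply, hι, mul_one]
    by_cases h : j = i
    · subst h; simp; ring
    · simp [h, Ne.symm h]
  show ∑ j, T i j * ι j = _
  rw [Finset.sum_congr rfl (fun j _ => hterm j), Finset.sum_add_distrib,
    Finset.sum_ite_eq' _ i]
  simp only [Finset.mem_univ, if_true]
  rw [← Finset.sum_mul, ← Finset.mul_sum]
  simp only [hv, hu]
  have hz : (σ i : ℝ) ^ (-2 : ℤ) = (σ i)⁻¹ * (σ i)⁻¹ := by
    rw [show (-2:ℤ) = -(2:ℤ) from rfl, _root_.zpow_neg, zpow_two, mul_inv]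
  rw [hz, ha, hb]
  have hd : den ≠ 0 := hden
  rw [hden_def] at hd
  rw [hden_def]
  generalize (∑ j, (σ j)⁻¹) = s
  generalize (σ i)⁻¹ = x
  field_simp
  ring
end

section
/- Let N ≥ 2, −1/(N−1) < ρ < 1, let σ_1,…,σ_N > 0, let D = diag(σ_1,…,σ_N), and let Σ = D·R(ρ)·D. Then the i-th component of the Bates–Granger optimal combining weight vector λ* = (ιᵀΣ⁻¹ι)⁻¹·Σ⁻¹ι is λ*_i = (σ_i⁻² + ρ(N−2)σ_i⁻² − ρ·Σ_{j≠i} σ_i⁻¹σ_j⁻¹) / (Σ_{l=1}^N (σ_l⁻² + ρ(N−2)σ_l⁻² − ρ·Σ_{j≠l} σ_l⁻¹σ_j⁻¹)). -/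
open Matrix Finset

/-- Weak equicorrelation: the i-th Bates–Granger optimal combining weight is
`λ*_i = (σ_i⁻² + ρ(N−2)σ_i⁻² − ρ·Σ_{j≠i}σ_i⁻¹σ_j⁻¹) /
  (Σ_l (σ_l⁻² + ρ(N−2)σ_l⁻² − ρ·Σ_{j≠l}σ_l⁻¹σ_j⁻¹))`. -/
theorem stmt14 (N : ℕ) (hN : 2 ≤ N) (ρ : ℝ)
    (h1 : -1 / ((N : ℝ) - 1) < ρ) (h2 : ρ < 1)
    (σ : Fin N → ℝ) (hσ : ∀ i, 0 < σ i)
    (R : Matrix (Fin N) (Fin N) ℝ)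
    (hR : R = Matrix.of fun i j => if i = j then (1 : ℝ) else ρ)
    (D : Matrix (Fin N) (Fin N) ℝ) (hD : D = Matrix.diagonal σ)
    (S : Matrix (Fin N) (Fin N) ℝ) (hS : S = D * R * D)
    (ι : Fin N → ℝ) (hι : ι = fun _ => 1)
    (lam : Fin N → ℝ) (hlam : lam = (ι ⬝ᵥ (S⁻¹ *ᵥ ι))⁻¹ • (S⁻¹ *ᵥ ι)) :
    ∀ i, lam i =
      ((σ i) ^ (-2 : ℤ) + ρ * ((N : ℝ) - 2) * (σ i) ^ (-2 : ℤ) -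
        ρ * ∑ j ∈ Finset.univ.erase i, (σ i)⁻¹ * (σ j)⁻¹) /
      (∑ l, ((σ l) ^ (-2 : ℤ) + ρ * ((N : ℝ) - 2) * (σ l) ^ (-2 : ℤ) -
        ρ * ∑ j ∈ Finset.univ.erase l, (σ l)⁻¹ * (σ j)⁻¹)) := by
  have hN1 : (0:ℝ) < (N:ℝ) - 1 := by
    have : (2:ℝ) ≤ (N:ℝ) := by exact_mod_cast hN
    linarith
  have h1ρ : (0:ℝ) < 1 - ρ := by linarith
  have hc2 : (0:ℝ) < 1 + ((N:ℝ) - 1) * ρ := by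
    have := (div_lt_iff₀ hN1).mp h1
    nlinarith
  set c : ℝ := (1 - ρ) * (1 + ((N:ℝ) - 1) * ρ) with hc_def
  have hc : c ≠ 0 := by positivity
  set a : ℝ := (1 - ρ)⁻¹ with ha_def
  set b : ℝ := -ρ / c with hb_def
  set M : Matrix (Fin N) (Fin N) ℝ := Matrix.of fun i j => b + if i = j then a else 0 with hM_def
  -- row sums of R
  have hrow : ∀ i : Fin N, ∑ k, R i k = 1 + ((N:ℝ) - 1) * ρ := by
    intro i
    have h : ∀ k, R i k = ρ + (if i = k then 1 - ρ else 0) := by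
      intro k; by_cases h : i = k <;> simp [hR, h]
    simp only [h]
    rw [Finset.sum_add_distrib, Finset.sum_const, Finset.sum_ite_eq]
    simp only [Finset.mem_univ, if_true, Finset.card_univ, Fintype.card_fin, nsmul_eq_mul]
    ring
  have hRM : R * M = 1 := by
    ext i j
    rw [Matrix.mul_apply]
    have h : ∀ k, R i k * M k j = R i k * b + (if k = j then R i k * a else 0) := by
      intro k
      by_cases h : k = j <;> simp [hM_def, h, mul_add]
    simp only [h]
    rw [Finset.sum_add_distrib, ← Finset.sum_mul, hrow, Finset.sum_ite_eq']
    simp only [Finset.mem_univ, if_true]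
    rw [hR, Matrix.one_apply]
    by_cases hij : i = j
    · simp only [Matrix.of_apply, if_pos hij, one_mul]
      rw [hb_def, ha_def, hc_def]
      field_simp
      ring
    · simp only [Matrix.of_apply, if_neg hij]
      rw [hb_def, ha_def, hc_def]
      field_simp
      ring
  -- explicit inverse of S
  set Dinv : Matrix (Fin N) (Fin N) ℝ := Matrix.diagonal (fun i => (σ i)⁻¹) with hDinv_def
  have hDDinv : D * Dinv = 1 := by
    rw [hD, hDinv_def, Matrix.diagonal_mul_diagonal]
    have : (fun i => σ i * (σ i)⁻¹) = fun _ : Fin N => (1:ℝ) := by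
      funext i; exact mul_inv_cancel₀ (hσ i).ne'
    rw [this, Matrix.diagonal_one]
  set M' : Matrix (Fin N) (Fin N) ℝ := Dinv * M * Dinv with hM'_def
  have hSM' : S * M' = 1 := by
    rw [hS, hM'_def]
    calc D * R * D * (Dinv * M * Dinv)
        = D * R * (D * Dinv) * (M * Dinv) := by
          simp only [Matrix.mul_assoc]
      _ = D * (R * M) * Dinv := by
          rw [hDDinv, Matrix.mul_one]
          simp only [Matrix.mul_assoc]
      _ = 1 := by rw [hRM, Matrix.mul_one, hDDinv]
  have hSinv : S⁻¹ = M' := Matrix.inv_eq_right_inv hSM'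
  set T : ℝ := ∑ j, (σ j)⁻¹ with hT_def
  -- entries of S⁻¹ *ᵥ ι
  have hu : ∀ i, (S⁻¹ *ᵥ ι) i = (σ i)⁻¹ * b * T + (σ i)⁻¹ * a * (σ i)⁻¹ := by
    intro i
    rw [hSinv, hι]
    have hMe : ∀ j, M' i j = (σ i)⁻¹ * ((b + if i = j then a else 0) * (σ j)⁻¹) := by
      intro j
      rw [hM'_def, hDinv_def, Matrix.mul_diagonal, Matrix.diagonal_mul, hM_def]
      simp only [Matrix.of_apply]
      ring
    simp only [Matrix.mulVec, dotProduct, mul_one, hMe]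
    rw [← Finset.mul_sum]
    have : ∀ j : Fin N, (b + if i = j then a else 0) * (σ j)⁻¹
        = b * (σ j)⁻¹ + (if i = j then a * (σ j)⁻¹ else 0) := by
      intro j; by_cases h : i = j <;> simp [h, add_mul]
    simp only [this]
    rw [Finset.sum_add_distrib, ← Finset.mul_sum, Finset.sum_ite_eq]
    simp only [Finset.mem_univ, if_true, ← hT_def]
    ring
  -- numerator equals c * u
  have hw : ∀ i, ((σ i) ^ (-2 : ℤ) + ρ * ((N : ℝ) - 2) * (σ i) ^ (-2 : ℤ) -
        ρ * ∑ j ∈ Finset.univ.erase i, (σ i)⁻¹ * (σ j)⁻¹)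
      = c * ((σ i)⁻¹ * b * T + (σ i)⁻¹ * a * (σ i)⁻¹) := by
    intro i
    have hz : (σ i) ^ (-2 : ℤ) = (σ i)⁻¹ * (σ i)⁻¹ := by
      rw [_root_.zpow_neg, ← mul_inv, show (2:ℤ) = ((2:ℕ):ℤ) from rfl, zpow_natCast,
        pow_two]
    have he : ∑ j ∈ Finset.univ.erase i, (σ i)⁻¹ * (σ j)⁻¹
        = (σ i)⁻¹ * T - (σ i)⁻¹ * (σ i)⁻¹ := by
      rw [Finset.sum_erase_eq_sub (Finset.mem_univ i), ← Finset.mul_sum, hT_def]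
    have e1 : c * b = -ρ := by rw [hb_def]; field_simp
    have e2 : c * a = 1 + ((N:ℝ) - 1) * ρ := by
      rw [ha_def, hc_def, mul_comm (1 - ρ), mul_assoc, mul_inv_cancel₀ h1ρ.ne', mul_one]
    have key : c * ((σ i)⁻¹ * b * T + (σ i)⁻¹ * a * (σ i)⁻¹)
        = (c * b) * ((σ i)⁻¹ * T) + (c * a) * ((σ i)⁻¹ * (σ i)⁻¹) := by ring
    rw [hz, he, key, e1, e2]
    ring
  -- assemble
  intro i
  rw [hlam]
  have hdot : ι ⬝ᵥ (S⁻¹ *ᵥ ι) = ∑ l, (S⁻¹ *ᵥ ι) l := by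
    rw [hι]; simp [dotProduct]
  simp only [Pi.smul_apply, smul_eq_mul, hdot]
  rw [hw i]
  have hsum : ∑ l, ((σ l) ^ (-2 : ℤ) + ρ * ((N : ℝ) - 2) * (σ l) ^ (-2 : ℤ) -
        ρ * ∑ j ∈ Finset.univ.erase l, (σ l)⁻¹ * (σ j)⁻¹)
      = c * ∑ l, (S⁻¹ *ᵥ ι) l := by
    rw [Finset.mul_sum]
    exact Finset.sum_congr rfl fun l _ => by rw [hw l, hu l]
  rw [hsum, hu i, mul_div_mul_left _ _ hc, div_eq_inv_mul]
end
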